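/- Suppose P = {f_1,…,f_n} is a Ruspini partition of continuous fuzzy sets, each f_i is min-convex and strongly normal with peak at t_i, where 0 = t_1 < ⋯ < t_n = 1 and f_i(t_j) = 0 for j ≠ i. Then for every i ∈ {1,…,n−1}, every x ∈ [t_i, t_{i+1}], and every j ∉ {i, i+1}, f_j(x) = 0. -/

import Mathlib

/-! A min-convex function is quasiconcave, so along the segment from its peak `t_j` to a point `x`
it is at least `min (f (t_j)) (f x) = f x`. For `j ∉ {i, i+1}` and `x ∈ [t_i, t_{i+1}]`, one of the
nodes `t_i`, `t_{i+1}` lies between `t_j` and `x`, where `f_j` vanishes; hence `0 ≤ f_j x ≤ 0`. -/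

open Set

section Quasiconcave

variable {𝕜 β : Type*} [Field 𝕜] [LinearOrder 𝕜] [IsStrictOrderedRing 𝕜] [LinearOrder β]
  {s : Set 𝕜} {f : 𝕜 → β}

theorem quasiconcaveOn_of_min_le (hs : Convex 𝕜 s)
    (hf : ∀ x ∈ s, ∀ y ∈ s, ∀ l ∈ Icc (0 : 𝕜) 1, min (f x) (f y) ≤ f (l * x + (1 - l) * y)) :
    QuasiconcaveOn 𝕜 s f := by
  refine quasiconcaveOn_iff_min_le.2 ⟨hs, fun x hx y hy a b ha hb hab => ?_⟩
  obtain rfl : b = 1 - a := eq_sub_of_add_eq' hab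
  exact hf x hx y hy a ⟨ha, by linarith⟩

end Quasiconcave

section QuasiconcaveSegment

variable {𝕜 E β : Type*} [Semiring 𝕜] [PartialOrder 𝕜] [AddCommMonoid E] [SMul 𝕜 E]
  [LinearOrder β] {s : Set E} {f : E → β} {x y z : E}

theorem QuasiconcaveOn.min_le_of_mem_segment (hf : QuasiconcaveOn 𝕜 s f) (hx : x ∈ s)
    (hy : y ∈ s) (hz : z ∈ segment 𝕜 x y) : min (f x) (f y) ≤ f z :=
  ((hf _).segment_subset ⟨hx, min_le_left _ _⟩ ⟨hy, min_le_right _ _⟩ hz).2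

theorem QuasiconcaveOn.eq_zero_of_mem_segment [Zero β] (hf : QuasiconcaveOn 𝕜 s f)
    (hx : x ∈ s) (hy : y ∈ s) (hz : z ∈ segment 𝕜 x y) (hfx : 0 < f x) (hfz : f z = 0)
    (hfy : 0 ≤ f y) : f y = 0 := by
  have hmin := hfz ▸ hf.min_le_of_mem_segment hx hy hz
  exact le_antisymm ((min_le_iff.1 hmin).resolve_left hfx.not_ge) hfy

end QuasiconcaveSegment

/-- For a Ruspini partition of continuous, min-convex, strongly normal fuzzy sets
with peaks `0 = t_1 < ⋯ < t_n = 1` and `f i (t j) = 0` for `j ≠ i`, every `f j`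
with `j ∉ {i, i+1}` vanishes on `[t_i, t_{i+1}]`. -/
theorem stmt9 (n : ℕ) (hn : 2 ≤ n) (f : Fin n → ℝ → ℝ)
    (hmap : ∀ i, Set.MapsTo (f i) (Set.Icc 0 1) (Set.Icc 0 1))
    (hconv : ∀ i, ∀ x ∈ Set.Icc (0:ℝ) 1, ∀ y ∈ Set.Icc (0:ℝ) 1,
      ∀ l ∈ Set.Icc (0:ℝ) 1, min (f i x) (f i y) ≤ f i (l * x + (1 - l) * y))
    (t : Fin n → ℝ) (hmono : StrictMono t)
    (ht0 : t ⟨0, by omega⟩ = 0)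
    (ht1 : t ⟨n - 1, by omega⟩ = 1)
    (hpeak : ∀ i, f i (t i) = 1)
    (hzero : ∀ i j : Fin n, j ≠ i → f i (t j) = 0) :
    ∀ i : Fin n, ∀ hi : (i : ℕ) + 1 < n,
      ∀ x ∈ Set.Icc (t i) (t ⟨(i : ℕ) + 1, hi⟩),
      ∀ j : Fin n, j ≠ i → j ≠ ⟨(i : ℕ) + 1, hi⟩ → f j x = 0 := by
  intro i hi x hx j hji hji'
  have ht_mem : ∀ k, t k ∈ Icc (0 : ℝ) 1 := fun k =>
    ⟨ht0 ▸ hmono.monotone (Fin.le_def.2 (Nat.zero_le _)),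
      ht1 ▸ hmono.monotone (Fin.le_def.2 (by simp only; omega))⟩
  have hx_mem : x ∈ Icc (0 : ℝ) 1 := ⟨(ht_mem i).1.trans hx.1, hx.2.trans (ht_mem _).2⟩
  have hfj := quasiconcaveOn_of_min_le (convex_Icc 0 1) (hconv j)
  have vanish : ∀ k, k ≠ j → t k ∈ uIcc (t j) x → f j x = 0 := fun k hkj hk =>
    hfj.eq_zero_of_mem_segment (ht_mem j) hx_mem (segment_eq_uIcc (t j) x ▸ hk)
      (by simp [hpeak]) (hzero j k hkj) (hmap j hx_mem).1
  rcases lt_or_gt_of_ne hji with hlt | hgt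
  · exact vanish i hji.symm (mem_uIcc.2 (Or.inl ⟨(hmono hlt).le, hx.1⟩))
  · have hsucc : (⟨i + 1, hi⟩ : Fin n) < j := by
      simp only [Ne, Fin.ext_iff, Fin.lt_def] at hji' hgt ⊢
      omega
    exact vanish _ hji'.symm (mem_uIcc.2 (Or.inr ⟨hx.2, (hmono hsucc).le⟩))
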